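/- Let S and A be finite nonempty sets, p : S × A × S → ℝ with p(j|i,a) ≥ 0 and Σ_{j∈S} p(j|i,a) = 1 for all (i,a), 0 ≤ γ < 1, and N > 0. The map Q ↦ J_U(Q), where J_U(Q)((i,a),(k,c)) = γ·p(k|i,a)·e^{N·Q(k,c)}/(Σ_{b∈A} e^{N·Q(k,b)}), is Lipschitz continuous: there exists a constant L > 0 (depending on N, γ and |A|) such that for all P, Q : S × A → ℝ, ‖J_U(P) − J_U(Q)‖ ≤ L·‖P − Q‖, where ‖·‖ on matrices denotes the operator norm induced by the sup norm and ‖P − Q‖ = max_{(i,a)} |P(i,a) − Q(i,a)|. -/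

import Mathlib

/-!
Each entry of `J_U(Q)` is `γ p(k|i,a)` times the softmax `σ(N Q(k,·))` at `c`. If
`|x b - y b| ≤ t` for all `b`, numerator and denominator of the softmax change by a factor
in `[e^{-t}, e^t]`, so `σ(x) c ≤ e^{2t} σ(y) c` and vice versa; since softmax values lie in
`[0, 1]`, `1 - e^{-s} ≤ s` turns this into `|σ(x) c - σ(y) c| ≤ 2t`. Summing over a row, with
`t = N ‖P - Q‖`, gives `‖J_U(P) - J_U(Q)‖ ≤ 2 N γ |A| ‖P - Q‖`.
-/

/-- The Jacobian matrix of the modified Bellman operator: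
`J_U(Q)((i,a),(k,c)) = γ·p(k|i,a)·e^{N·Q(k,c)} / Σ_b e^{N·Q(k,b)}`. -/
noncomputable def jacU {S A : Type*} [Fintype A]
    (p : S → A → S → ℝ) (γ N : ℝ) (Q : S → A → ℝ) : Matrix (S × A) (S × A) ℝ :=
  Matrix.of fun ia kc =>
    γ * p ia.1 ia.2 kc.1 * (Real.exp (N * Q kc.1 kc.2) / ∑ b, Real.exp (N * Q kc.1 b))

/-- Operator norm induced by the sup norm: the maximum absolute row sum. -/
noncomputable def maxRowSumNorm {S A : Type*} [Fintype S] [Fintype A]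
    [Nonempty S] [Nonempty A] (M : Matrix (S × A) (S × A) ℝ) : ℝ :=
  Finset.univ.sup' Finset.univ_nonempty (fun ia : S × A => ∑ kc : S × A, |M ia kc|)

/-- Sup norm of a Q-function: `‖Q‖ = max_{(i,a)} |Q(i,a)|`. -/
noncomputable def qSupNorm {S A : Type*} [Fintype S] [Fintype A] [Nonempty S] [Nonempty A]
    (Q : S → A → ℝ) : ℝ :=
  Finset.univ.sup' Finset.univ_nonempty (fun ia : S × A => |Q ia.1 ia.2|)

open Finset Real

noncomputable def softmax {A : Type*} [Fintype A] (x : A → ℝ) (c : A) : ℝ :=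
  exp (x c) / ∑ b, exp (x b)

lemma sub_le_of_le_exp_mul {a b t : ℝ} (ha : a ≤ 1) (ht : 0 ≤ t) (hab : a ≤ exp t * b) :
    a - b ≤ t :=
  calc a - b ≤ a - exp (-t) * a := by
        have : exp (-t) * a ≤ b := by
          rw [exp_neg, inv_mul_le_iff₀ (exp_pos t)]; exact hab
        linarith
    _ = a * (1 - exp (-t)) := by ring
    _ ≤ 1 * (1 - exp (-t)) :=
        mul_le_mul_of_nonneg_right ha (sub_nonneg.mpr (exp_le_one_iff.mpr (by linarith)))
    _ ≤ t := by linarith [add_one_le_exp (-t)]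

lemma abs_sub_le_of_le_exp_mul {a b t : ℝ} (ha : a ≤ 1) (hb : b ≤ 1) (ht : 0 ≤ t)
    (hab : a ≤ exp t * b) (hba : b ≤ exp t * a) : |a - b| ≤ t :=
  abs_sub_le_iff.mpr ⟨sub_le_of_le_exp_mul ha ht hab, sub_le_of_le_exp_mul hb ht hba⟩

lemma exp_le_exp_mul_exp_of_abs_sub_le {u v t : ℝ} (h : |u - v| ≤ t) :
    exp u ≤ exp t * exp v := by
  rw [← exp_add, exp_le_exp]
  linarith [le_abs_self (u - v)]

section Softmax

variable {A : Type*} [Fintype A] [Nonempty A]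

lemma sum_exp_pos (x : A → ℝ) : 0 < ∑ b, exp (x b) :=
  sum_pos (fun b _ => exp_pos (x b)) univ_nonempty

lemma softmax_le_one (x : A → ℝ) (c : A) : softmax x c ≤ 1 :=
  (div_le_one (sum_exp_pos x)).mpr
    (single_le_sum (f := fun b => exp (x b)) (fun _ _ => (exp_pos _).le) (mem_univ c))

lemma softmax_le_exp_mul_softmax {x y : A → ℝ} {t : ℝ} (h : ∀ b, |x b - y b| ≤ t) (c : A) :
    softmax x c ≤ exp (2 * t) * softmax y c := by
  have hnum : exp (x c) ≤ exp t * exp (y c) := exp_le_exp_mul_exp_of_abs_sub_le (h c)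
  have hden : ∑ b, exp (y b) ≤ exp t * ∑ b, exp (x b) := by
    rw [mul_sum]
    exact sum_le_sum fun b _ => exp_le_exp_mul_exp_of_abs_sub_le (by rw [abs_sub_comm]; exact h b)
  have hx := sum_exp_pos x
  have hy := sum_exp_pos y
  rw [softmax, softmax, div_le_iff₀ hx, two_mul, exp_add]
  calc exp (x c) ≤ exp t * exp (y c) := hnum
    _ = exp t * (exp (y c) / ∑ b, exp (y b)) * ∑ b, exp (y b) := by field_simp
    _ ≤ exp t * (exp (y c) / ∑ b, exp (y b)) * (exp t * ∑ b, exp (x b)) := by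
        gcongr
    _ = exp t * exp t * (exp (y c) / ∑ b, exp (y b)) * ∑ b, exp (x b) := by ring

lemma abs_softmax_sub_softmax_le {x y : A → ℝ} {t : ℝ} (h : ∀ b, |x b - y b| ≤ t) (c : A) :
    |softmax x c - softmax y c| ≤ 2 * t := by
  have ht : 0 ≤ t := (abs_nonneg _).trans (h c)
  refine abs_sub_le_of_le_exp_mul (softmax_le_one x c) (softmax_le_one y c) (by linarith)
    (softmax_le_exp_mul_softmax h c) (softmax_le_exp_mul_softmax (fun b => ?_) c)
  rw [abs_sub_comm]; exact h b

lemma abs_softmax_mul_sub_softmax_mul_le {x y : A → ℝ} {N D : ℝ} (hN : 0 ≤ N)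
    (h : ∀ b, |x b - y b| ≤ D) (c : A) :
    |softmax (fun b => N * x b) c - softmax (fun b => N * y b) c| ≤ 2 * N * D := by
  rw [mul_assoc]
  refine abs_softmax_sub_softmax_le (fun b => ?_) c
  rw [← mul_sub, abs_mul, abs_of_nonneg hN]
  exact mul_le_mul_of_nonneg_left (h b) hN

end Softmax

lemma abs_le_qSupNorm {S A : Type*} [Fintype S] [Fintype A] [Nonempty S] [Nonempty A]
    (Q : S → A → ℝ) (k : S) (c : A) : |Q k c| ≤ qSupNorm Q :=
  le_sup' (fun ia : S × A => |Q ia.1 ia.2|) (mem_univ (k, c))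

lemma qSupNorm_nonneg {S A : Type*} [Fintype S] [Fintype A] [Nonempty S] [Nonempty A]
    (Q : S → A → ℝ) : 0 ≤ qSupNorm Q :=
  (abs_nonneg _).trans (abs_le_qSupNorm Q (Classical.arbitrary S) (Classical.arbitrary A))

lemma jacU_sub_jacU_apply {S A : Type*} [Fintype A] (p : S → A → S → ℝ) (γ N : ℝ)
    (P Q : S → A → ℝ) (ia kc : S × A) :
    (jacU p γ N P - jacU p γ N Q) ia kc = γ * p ia.1 ia.2 kc.1 *
      (softmax (fun b => N * P kc.1 b) kc.2 - softmax (fun b => N * Q kc.1 b) kc.2) := by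
  simp only [jacU, softmax, Matrix.sub_apply, Matrix.of_apply]
  ring

/-- The map `Q ↦ J_U(Q)` is Lipschitz: there is `L > 0` (depending on `N`, `γ`, `|A|`)
with `‖J_U(P) − J_U(Q)‖ ≤ L·‖P − Q‖` in the induced (max absolute row sum) norm. -/
theorem jacU_lipschitz {S A : Type*} [Fintype S] [Fintype A] [Nonempty S] [Nonempty A]
    (p : S → A → S → ℝ) (hp0 : ∀ i a j, 0 ≤ p i a j) (hp1 : ∀ i a, ∑ j, p i a j = 1)
    (γ : ℝ) (hγ0 : 0 ≤ γ) (hγ1 : γ < 1) (N : ℝ) (hN : 0 < N) :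
    ∃ L : ℝ, 0 < L ∧ ∀ P Q : S → A → ℝ,
      maxRowSumNorm (jacU p γ N P - jacU p γ N Q) ≤
        L * qSupNorm (fun i a => P i a - Q i a) := by
  refine ⟨2 * N * Fintype.card A, by positivity, fun P Q => sup'_le _ _ fun ia _ => ?_⟩
  set d := qSupNorm (fun i a => P i a - Q i a)
  have hsoftmax (k : S) (c : A) :
      |softmax (fun b => N * P k b) c - softmax (fun b => N * Q k b) c| ≤ 2 * N * d :=
    abs_softmax_mul_sub_softmax_mul_le hN.le
      (abs_le_qSupNorm (fun i a => P i a - Q i a) k) c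
  have hd : 0 ≤ d := qSupNorm_nonneg _
  calc ∑ kc : S × A, |(jacU p γ N P - jacU p γ N Q) ia kc|
      ≤ ∑ kc : S × A, γ * p ia.1 ia.2 kc.1 * (2 * N * d) := by
        refine sum_le_sum fun kc _ => ?_
        rw [jacU_sub_jacU_apply, abs_mul, abs_of_nonneg (mul_nonneg hγ0 (hp0 _ _ _))]
        exact mul_le_mul_of_nonneg_left (hsoftmax kc.1 kc.2) (mul_nonneg hγ0 (hp0 _ _ _))
    _ = γ * (2 * N * Fintype.card A * d) * ∑ k, p ia.1 ia.2 k := by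
        simp only [Fintype.sum_prod_type, sum_const, card_univ, nsmul_eq_mul, mul_sum]
        exact sum_congr rfl fun k _ => by ring
    _ ≤ 2 * N * Fintype.card A * d := by
        rw [hp1, mul_one]
        exact mul_le_of_le_one_left (by positivity) hγ1.le
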